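/- If G is a connected graph of diameter 3 and H is a graph with at least one edge, then χ_ρ(G∘H) = |V(G)|·|V(H)| − α(G)·α(H) − ρ_2(G) + 2. -/

import Mathlib

open SimpleGraph

/-- The lexicographic product of simple graphs. -/
def SimpleGraph.lexProd {α β : Type*} (G : SimpleGraph α) (H : SimpleGraph β) :
    SimpleGraph (α × β) where
  Adj x y := G.Adj x.1 y.1 ∨ (x.1 = y.1 ∧ H.Adj x.2 y.2)
  symm := by
    constructor
    rintro ⟨g1, h1⟩ ⟨g2, h2⟩ (h | ⟨rfl, h⟩)
    · exact Or.inl h.symm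
    · exact Or.inr ⟨rfl, h.symm⟩
  loopless := by
    constructor
    rintro ⟨g, h⟩ (h' | ⟨-, h'⟩)
    · exact G.loopless.irrefl g h'
    · exact H.loopless.irrefl h h'

/-- A set of vertices is independent if its vertices are pairwise non-adjacent. -/
def SimpleGraph.IndepSet {α : Type*} (G : SimpleGraph α) (s : Set α) : Prop :=
  ∀ u ∈ s, ∀ v ∈ s, u ≠ v → ¬ G.Adj u v

/-- The independence number: the largest cardinality of an independent set. -/
noncomputable def SimpleGraph.indepNum' {α : Type*} [Fintype α] (G : SimpleGraph α) : ℕ :=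
  sSup {n | ∃ s : Finset α, G.IndepSet ↑s ∧ s.card = n}

/-- An `i`-packing: a set of vertices pairwise at distance greater than `i`. -/
def SimpleGraph.IsPacking {α : Type*} (G : SimpleGraph α) (i : ℕ) (s : Set α) : Prop :=
  ∀ u ∈ s, ∀ v ∈ s, u ≠ v → i < G.dist u v

/-- The `i`-packing number: the largest cardinality of an `i`-packing. -/
noncomputable def SimpleGraph.packingNum {α : Type*} [Fintype α] (G : SimpleGraph α)
    (i : ℕ) : ℕ :=
  sSup {n | ∃ s : Finset α, G.IsPacking i ↑s ∧ s.card = n}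

/-- A `k`-packing coloring: colors in `{1, …, k}`, and any two distinct vertices sharing
color `i` are at distance greater than `i`. -/
def SimpleGraph.IsPackingColoring {α : Type*} (G : SimpleGraph α) (k : ℕ) (c : α → ℕ) :
    Prop :=
  (∀ v, c v ∈ Finset.Icc 1 k) ∧ ∀ u v, u ≠ v → c u = c v → c u < G.dist u v

/-- The packing chromatic number: the least `k` admitting a `k`-packing coloring. -/
noncomputable def SimpleGraph.packingChromatic {α : Type*} (G : SimpleGraph α) : ℕ :=
  sInf {k | ∃ c : α → ℕ, G.IsPackingColoring k c}

/-- `d(G) = 1` if `G` is complete, and `diam(G) - 1` otherwise. -/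
noncomputable def SimpleGraph.dval {α : Type*} [Fintype α] (G : SimpleGraph α) : ℕ :=
  letI := Classical.dec (G = (⊤ : SimpleGraph α))
  if G = (⊤ : SimpleGraph α) then 1 else G.diam - 1


/-!
When `G` is connected and nontrivial, two vertices of `G ∘ H` in the same `G`-fibre are at
distance at most 2, and otherwise at the distance of their projections to `G`; so `G ∘ H` has
diameter at most 3 when `G` does. In a packing coloring of a graph of diameter at most 3 every
color `i ≥ 3` is used at most once, color 1 is an independent set and color 2 a 2-packing.
Independent sets of `G ∘ H` have at most `α(G) α(H)` vertices, and a 2-packing of `G ∘ H`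
projects injectively onto a 2-packing of `G`; this gives the lower bound. Conversely, color
`I × J` with 1 for maximum independent sets `I`, `J` of `G`, `H`, color `S × {h₀}` with 2 for a
maximum 2-packing `S` of `G` and some `h₀ ∉ J` (which exists as `H` has an edge), and give every
remaining vertex a color of its own.
-/

open Finset

lemma Finset.bddAbove_setOf_card {V : Type*} [Fintype V] (P : Finset V → Prop) :
    BddAbove {n | ∃ t : Finset V, P t ∧ #t = n} :=
  bddAbove_def.mpr ⟨Fintype.card V, by rintro n ⟨t, -, rfl⟩; exact t.card_le_univ⟩

lemma Finset.card_le_sSup_card {V : Type*} [Fintype V] {P : Finset V → Prop} {s : Finset V}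
    (hs : P s) : #s ≤ sSup {n | ∃ t : Finset V, P t ∧ #t = n} :=
  le_csSup (bddAbove_setOf_card P) ⟨s, hs, rfl⟩

lemma Finset.exists_card_eq_sSup_card {V : Type*} [Fintype V] {P : Finset V → Prop}
    (h : P ∅) : ∃ s : Finset V, P s ∧ #s = sSup {n | ∃ t : Finset V, P t ∧ #t = n} :=
  Nat.sSup_mem (s := {n | ∃ t : Finset V, P t ∧ #t = n}) ⟨0, ∅, h, rfl⟩
    (bddAbove_setOf_card P)

namespace SimpleGraph

section Packing

variable {V : Type*} {Γ : SimpleGraph V}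

lemma IndepSet.isPacking_one (hΓ : Γ.Preconnected) {s : Set V} (hs : Γ.IndepSet s) :
    Γ.IsPacking 1 s :=
  fun u hu v hv hne => (hΓ u v).one_lt_dist_of_ne_of_not_adj hne (hs u hu v hv hne)

lemma IsPacking.indepSet {s : Set V} (hs : Γ.IsPacking 1 s) : Γ.IndepSet s :=
  fun u hu v hv hne hadj => (hs u hu v hv hne).ne' (dist_eq_one_iff_adj.mpr hadj)

lemma IsPacking.subsingleton {i : ℕ} {s : Set V} (hs : Γ.IsPacking i s)
    (hi : ∀ u v, Γ.dist u v ≤ i) : s.Subsingleton :=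
  fun u hu v hv => by_contra fun hne => (hs u hu v hv hne).not_ge (hi u v)

lemma IsPackingColoring.two_le {k : ℕ} {c : V → ℕ} (hc : Γ.IsPackingColoring k c) {u v : V}
    (hadj : Γ.Adj u v) : 2 ≤ k := by
  have hu := mem_Icc.mp (hc.1 u)
  have hv := mem_Icc.mp (hc.1 v)
  have hne : c u ≠ c v := fun h => by
    have := hc.2 u v hadj.ne h
    rw [dist_eq_one_iff_adj.mpr hadj] at this
    omega
  omega

lemma packingChromatic_le {k : ℕ} {c : V → ℕ} (hc : Γ.IsPackingColoring k c) :
    Γ.packingChromatic ≤ k :=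
  Nat.sInf_le ⟨c, hc⟩

variable [Fintype V]

lemma card_le_indepNum' {s : Finset V} (hs : Γ.IndepSet s) : #s ≤ Γ.indepNum' :=
  card_le_sSup_card (P := fun s : Finset V => Γ.IndepSet s) hs

lemma exists_indepSet_card_eq_indepNum' : ∃ s : Finset V, Γ.IndepSet s ∧ #s = Γ.indepNum' :=
  exists_card_eq_sSup_card (P := fun s : Finset V => Γ.IndepSet s) (by simp [IndepSet])

lemma card_le_packingNum {i : ℕ} {s : Finset V} (hs : Γ.IsPacking i s) :
    #s ≤ Γ.packingNum i :=
  card_le_sSup_card (P := fun s : Finset V => Γ.IsPacking i s) hs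

lemma exists_isPacking_card_eq_packingNum (i : ℕ) :
    ∃ s : Finset V, Γ.IsPacking i s ∧ #s = Γ.packingNum i :=
  exists_card_eq_sSup_card (P := fun s : Finset V => Γ.IsPacking i s) (by simp [IsPacking])

lemma IsPackingColoring.isPacking {k : ℕ} {c : V → ℕ} (hc : Γ.IsPackingColoring k c)
    (i : ℕ) : Γ.IsPacking i ({v | c v = i} : Finset V) := by
  intro u hu v hv hne
  simp only [coe_filter, mem_univ, true_and, Set.mem_ofPred_eq] at hu hv
  exact hu ▸ hc.2 u v hne (hu.trans hv.symm)

lemma IsPackingColoring.card_add_two_le {k : ℕ} {c : V → ℕ} (hc : Γ.IsPackingColoring k c)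
    (hk : 2 ≤ k) (hdist : ∀ u v, Γ.dist u v ≤ 3) :
    Fintype.card V + 2 ≤ k + Γ.indepNum' + Γ.packingNum 2 := by
  have hsum : Fintype.card V = ∑ i ∈ Icc 1 k, #{v | c v = i} :=
    card_eq_sum_card_fiberwise fun v _ => hc.1 v
  have hIcc : Icc 1 k = insert 1 (insert 2 (Icc 3 k)) := by
    ext i; simp only [mem_Icc, mem_insert]; omega
  rw [hIcc, sum_insert (by simp), sum_insert (by simp)] at hsum
  have hsingle : ∀ i ∈ Icc 3 k, #({v | c v = i} : Finset V) ≤ 1 := fun i hi =>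
    card_le_one.mpr fun u hu v hv =>
      (hc.isPacking i).subsingleton (fun u v => (hdist u v).trans (mem_Icc.mp hi).1) hu hv
  have hrest : ∑ i ∈ Icc 3 k, #({v | c v = i} : Finset V) ≤ k - 2 :=
    (sum_le_card_nsmul _ _ 1 hsingle).trans (by simp)
  have h1 := card_le_indepNum' (hc.isPacking 1).indepSet
  have h2 := card_le_packingNum (hc.isPacking 2)
  omega

lemma exists_isPackingColoring_of_isPacking [DecidableEq V] {A B : Finset V}
    (hA : Γ.IsPacking 1 A) (hB : Γ.IsPacking 2 B) :
    ∃ c, Γ.IsPackingColoring (#(univ \ (A ∪ B)) + 2) c := by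
  set R := univ \ (A ∪ B)
  let c : V → ℕ := fun v =>
    if h : v ∈ R then R.equivFin ⟨v, h⟩ + 3 else if v ∈ A then 1 else 2
  have hrange : ∀ v, c v ∈ Icc 1 (#R + 2) := fun v => by
    have := fun h : v ∈ R => (R.equivFin ⟨v, h⟩).isLt
    simp only [c, mem_Icc]
    split_ifs <;> grind
  have hc1 : ∀ v, c v = 1 → v ∈ A := fun v => by
    simp only [c]
    split_ifs <;> simp_all
  have hc2 : ∀ v, c v = 2 → v ∈ B := fun v => by
    simp only [c, R, mem_sdiff, mem_union, mem_univ, true_and]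
    split_ifs <;> simp_all
  have hc3 : ∀ u v, 3 ≤ c u → c u = c v → u = v := fun u v => by
    simp only [c]
    split_ifs with hu _ _ hv
    · intro _ h
      simpa using R.equivFin.injective (Fin.ext (Nat.add_right_cancel h))
    all_goals omega
  refine ⟨c, hrange, fun u v hne huv => ?_⟩
  obtain h | h | h : c u = 1 ∨ c u = 2 ∨ 3 ≤ c u := by have := mem_Icc.mp (hrange u); omega
  · exact h ▸ hA u (hc1 u h) v (hc1 v (huv ▸ h)) hne
  · exact h ▸ hB u (hc2 u h) v (hc2 v (huv ▸ h)) hne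
  · exact absurd (hc3 u v h huv) hne

lemma exists_isPackingColoring_packingChromatic :
    ∃ c, Γ.IsPackingColoring Γ.packingChromatic c := by
  classical
  -- with `A = B = ∅` this is a coloring by pairwise distinct colors, so the `sInf` is attained
  obtain ⟨c, hc⟩ := exists_isPackingColoring_of_isPacking (Γ := Γ) (A := ∅) (B := ∅)
    (by simp [IsPacking]) (by simp [IsPacking])
  exact Nat.sInf_mem (s := {k | ∃ c, Γ.IsPackingColoring k c}) ⟨_, c, hc⟩

lemma card_add_two_le_packingChromatic_add {u v : V} (hadj : Γ.Adj u v)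
    (hdist : ∀ u v, Γ.dist u v ≤ 3) :
    Fintype.card V + 2 ≤ Γ.packingChromatic + Γ.indepNum' + Γ.packingNum 2 := by
  obtain ⟨c, hc⟩ := Γ.exists_isPackingColoring_packingChromatic
  exact hc.card_add_two_le (hc.two_le hadj) hdist

lemma packingChromatic_add_card_add_card_le [DecidableEq V] {A B : Finset V}
    (hA : Γ.IsPacking 1 A) (hB : Γ.IsPacking 2 B) (hAB : Disjoint A B) :
    Γ.packingChromatic + #A + #B ≤ Fintype.card V + 2 := by
  obtain ⟨c, hc⟩ := exists_isPackingColoring_of_isPacking hA hB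
  have hχ := packingChromatic_le hc
  have hAB_le := card_le_univ (A ∪ B)
  rw [card_sdiff_of_subset (subset_univ _), card_union_of_disjoint hAB, card_univ] at hχ
  rw [card_union_of_disjoint hAB] at hAB_le
  omega

end Packing

section LexProd

variable {α β : Type*} {G : SimpleGraph α} {H : SimpleGraph β}

@[simp]
lemma lexProd_adj {x y : α × β} :
    (G.lexProd H).Adj x y ↔ G.Adj x.1 y.1 ∨ x.1 = y.1 ∧ H.Adj x.2 y.2 :=
  Iff.rfl

variable (G H) in
@[simps]
def lexProdLeft (b : β) : G →g G.lexProd H where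
  toFun a := (a, b)
  map_rel' := Or.inl

lemma Walk.exists_walk_fst_length_le {x y : α × β} (w : (G.lexProd H).Walk x y) :
    ∃ p : G.Walk x.1 y.1, p.length ≤ w.length := by
  induction w with
  | nil => exact ⟨.nil, le_rfl⟩
  | cons hadj _ ih =>
    obtain ⟨p, hp⟩ := ih
    rcases lexProd_adj.mp hadj with hadj | ⟨heq, -⟩
    · exact ⟨.cons hadj p, by simpa using hp⟩
    · exact ⟨p.copy heq.symm rfl, by simp; omega⟩

lemma Walk.exists_lexProd_walk_length_eq {a a' : α} (p : G.Walk a a') (hp : ¬p.Nil)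
    (b b' : β) : ∃ w : (G.lexProd H).Walk (a, b) (a', b'), w.length = p.length := by
  cases p with
  | nil => exact absurd Walk.Nil.nil hp
  | cons hadj q =>
    exact ⟨.cons (lexProd_adj.mpr (.inl hadj)) (q.map (lexProdLeft G H b')),
      congrArg (· + 1) (q.length_map _)⟩

lemma dist_lexProd_of_ne {a a' : α} (hne : a ≠ a') (b b' : β) :
    (G.lexProd H).dist (a, b) (a', b') = G.dist a a' := by
  by_cases hr : G.Reachable a a'
  · obtain ⟨p, hp⟩ := hr.exists_walk_length_eq_dist
    obtain ⟨w, hw⟩ := p.exists_lexProd_walk_length_eq (H := H) (Walk.not_nil_of_ne hne) b b'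
    obtain ⟨w', hw'⟩ := (Walk.reachable w).exists_walk_length_eq_dist
    obtain ⟨p', hp'⟩ := w'.exists_walk_fst_length_le
    exact le_antisymm (hp ▸ hw ▸ dist_le w) (hw' ▸ (dist_le p').trans hp')
  · rw [dist_eq_zero_of_not_reachable hr, dist_eq_zero_of_not_reachable]
    rintro ⟨w⟩
    obtain ⟨p, -⟩ := w.exists_walk_fst_length_le
    exact hr p.reachable

lemma dist_lexProd_fiber_le_two {a a' : α} (hadj : G.Adj a a') (b b' : β) :
    (G.lexProd H).dist (a, b) (a, b') ≤ 2 :=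
  let w : (G.lexProd H).Walk (a, b) (a, b') :=
    .cons (v := (a', b)) (lexProd_adj.mpr (.inl hadj))
      (.cons (lexProd_adj.mpr (.inl hadj.symm)) .nil)
  (dist_le w).trans_eq rfl

lemma Preconnected.lexProd [Nontrivial α] (hG : G.Preconnected) :
    (G.lexProd H).Preconnected := by
  rintro ⟨a, b⟩ ⟨a', b'⟩
  by_cases hne : a = a'
  · subst hne
    obtain ⟨a₂, hadj⟩ := hG.exists_adj_of_nontrivial a
    have hadj' : (G.lexProd H).Adj (a, b) (a₂, b) := lexProd_adj.mpr (.inl hadj)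
    exact hadj'.reachable.trans (lexProd_adj.mpr (.inl hadj.symm)).reachable
  · refine Reachable.of_dist_ne_zero ?_
    rw [dist_lexProd_of_ne hne]
    exact ((hG a a').pos_dist_of_ne hne).ne'

lemma dist_lexProd_le_max [Nontrivial α] (hG : G.ediam ≠ ⊤) (x y : α × β) :
    (G.lexProd H).dist x y ≤ max 2 G.diam := by
  obtain ⟨a, b⟩ := x
  obtain ⟨a', b'⟩ := y
  by_cases hne : a = a'
  · subst hne
    obtain ⟨a₂, hadj⟩ := (preconnected_of_ediam_ne_top hG).exists_adj_of_nontrivial a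
    exact (dist_lexProd_fiber_le_two hadj b b').trans (le_max_left _ _)
  · rw [dist_lexProd_of_ne hne]
    exact (dist_le_diam hG).trans (le_max_right _ _)

lemma IndepSet.lexProd {s : Set α} {t : Set β} (hs : G.IndepSet s) (ht : H.IndepSet t) :
    (G.lexProd H).IndepSet (s ×ˢ t) := by
  rintro ⟨a, b⟩ ⟨ha, hb⟩ ⟨a', b'⟩ ⟨ha', hb'⟩ hne (hadj | ⟨rfl, hadj⟩)
  · exact hs a ha a' ha' hadj.ne hadj
  · exact ht b hb b' hb' (by simpa using hne) hadj

lemma IsPacking.image_lexProdLeft {i : ℕ} {s : Set α} (hs : G.IsPacking i s) (b : β) :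
    (G.lexProd H).IsPacking i (lexProdLeft G H b '' s) := by
  rintro _ ⟨a, ha, rfl⟩ _ ⟨a', ha', rfl⟩ hne
  have hne' : a ≠ a' := fun h => hne (h ▸ rfl)
  rw [lexProdLeft_apply, lexProdLeft_apply, dist_lexProd_of_ne hne']
  exact hs a ha a' ha' hne'

variable [Fintype α] [Fintype β]

lemma indepNum'_lexProd_le : (G.lexProd H).indepNum' ≤ G.indepNum' * H.indepNum' := by
  classical
  obtain ⟨s, hs, hcard⟩ := (G.lexProd H).exists_indepSet_card_eq_indepNum'
  have hfst : G.IndepSet ↑(s.image Prod.fst) := by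
    rw [coe_image]
    rintro _ ⟨x, hx, rfl⟩ _ ⟨y, hy, rfl⟩ hne hadj
    exact hs x hx y hy (fun h => hne (h ▸ rfl)) (lexProd_adj.mpr (.inl hadj))
  have hfiber : ∀ a, #{x ∈ s | x.1 = a} ≤ H.indepNum' := fun a => by
    have hinj : Set.InjOn Prod.snd (↑{x ∈ s | x.1 = a} : Set (α × β)) := by
      intro x hx y hy h
      simp only [coe_filter, Set.mem_ofPred_eq] at hx hy
      exact Prod.ext (hx.2.trans hy.2.symm) h
    rw [← card_image_of_injOn hinj]
    refine card_le_indepNum' ?_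
    simp only [coe_image, coe_filter]
    rintro _ ⟨x, ⟨hx, rfl⟩, rfl⟩ _ ⟨y, ⟨hy, hxy⟩, rfl⟩ hne hadj
    exact hs x hx y hy (fun h => hne (h ▸ rfl)) (lexProd_adj.mpr (.inr ⟨hxy.symm, hadj⟩))
  calc (G.lexProd H).indepNum' = #s := hcard.symm
    _ = ∑ a ∈ s.image Prod.fst, #{x ∈ s | x.1 = a} := card_eq_sum_card_image _ _
    _ ≤ #(s.image Prod.fst) * H.indepNum' := sum_le_card_nsmul _ _ _ fun a _ => hfiber a
    _ ≤ G.indepNum' * H.indepNum' := Nat.mul_le_mul_right _ (card_le_indepNum' hfst)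

lemma packingNum_lexProd_le [Nontrivial α] (hG : G.Preconnected) {i : ℕ} (hi : 2 ≤ i) :
    (G.lexProd H).packingNum i ≤ G.packingNum i := by
  classical
  obtain ⟨s, hs, hcard⟩ := (G.lexProd H).exists_isPacking_card_eq_packingNum i
  have hinj : Set.InjOn Prod.fst (s : Set (α × β)) := by
    rintro ⟨a, b⟩ hx ⟨a', b'⟩ hy (rfl : a = a')
    by_contra hne
    obtain ⟨a₂, hadj⟩ := hG.exists_adj_of_nontrivial a
    exact (hs _ hx _ hy hne).not_ge ((dist_lexProd_fiber_le_two hadj b b').trans hi)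
  have hpack : G.IsPacking i ↑(s.image Prod.fst) := by
    rw [coe_image]
    rintro _ ⟨⟨a, b⟩, hx, rfl⟩ _ ⟨⟨a', b'⟩, hy, rfl⟩ hne
    simpa [dist_lexProd_of_ne hne] using hs _ hx _ hy (fun h => hne (congrArg Prod.fst h))
  rw [← hcard, ← card_image_of_injOn hinj]
  exact card_le_packingNum hpack

lemma packingChromatic_lexProd_add_le [Nontrivial α] (hG : G.Preconnected) (hH : H ≠ ⊥) :
    (G.lexProd H).packingChromatic + G.indepNum' * H.indepNum' + G.packingNum 2 ≤
      Fintype.card α * Fintype.card β + 2 := by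
  classical
  obtain ⟨I, hI, hIcard⟩ := G.exists_indepSet_card_eq_indepNum'
  obtain ⟨J, hJ, hJcard⟩ := H.exists_indepSet_card_eq_indepNum'
  obtain ⟨S, hS, hScard⟩ := G.exists_isPacking_card_eq_packingNum 2
  obtain ⟨b, hb⟩ : ∃ b, b ∉ J := by
    obtain ⟨b, b', hbb'⟩ := ne_bot_iff_exists_adj.mp hH
    by_contra! hJ_univ
    exact hJ b (hJ_univ b) b' (hJ_univ b') hbb'.ne hbb'
  have hA : (G.lexProd H).IsPacking 1 ↑(I ×ˢ J) := by
    rw [coe_product]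
    exact (hI.lexProd hJ).isPacking_one hG.lexProd
  have hB : (G.lexProd H).IsPacking 2 ↑(S.image (lexProdLeft G H b)) := by
    rw [coe_image]
    exact hS.image_lexProdLeft b
  have hAB : Disjoint (I ×ˢ J) (S.image (lexProdLeft G H b)) := by
    rw [Finset.disjoint_left]
    rintro _ hA hB
    obtain ⟨a, -, rfl⟩ := mem_image.mp hB
    exact hb (mem_product.mp hA).2
  have := packingChromatic_add_card_add_card_le hA hB hAB
  rwa [card_product, card_image_of_injective _ fun _ _ h => congrArg Prod.fst h,
    Fintype.card_prod, hIcard, hJcard, hScard] at this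

end LexProd

end SimpleGraph

theorem packingChromatic_lexProd_diam_three_general {α β : Type*} [Fintype α] [Fintype β]
    (G : SimpleGraph α) (H : SimpleGraph β)
    (hd : G.diam = 3) (hH : H ≠ ⊥) :
    (((G.lexProd H).packingChromatic : ℤ)) =
      (Fintype.card α * Fintype.card β : ℤ) - (G.indepNum' : ℤ) * (H.indepNum' : ℤ)
        - (G.packingNum 2 : ℤ) + 2 := by
  have hG : G.ediam ≠ ⊤ := ediam_ne_top_of_diam_ne_zero (by rw [hd]; decide)
  have : Nontrivial α := nontrivial_of_diam_ne_zero (by rw [hd]; decide)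
  have hconn := preconnected_of_ediam_ne_top hG
  obtain ⟨a, -⟩ := exists_pair_ne α
  obtain ⟨b, b', hbb'⟩ := ne_bot_iff_exists_adj.mp hH
  have hdist (x y : α × β) : (G.lexProd H).dist x y ≤ 3 := by
    simpa [hd] using dist_lexProd_le_max hG x y
  have hlower := card_add_two_le_packingChromatic_add
    (lexProd_adj.mpr (.inr ⟨rfl, hbb'⟩) : (G.lexProd H).Adj (a, b) (a, b')) hdist
  have hupper := packingChromatic_lexProd_add_le hconn hH
  have hα := indepNum'_lexProd_le (G := G) (H := H)
  have hρ := packingNum_lexProd_le (H := H) hconn le_rfl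
  rw [Fintype.card_prod] at hlower
  zify at *
  linarith

theorem packingChromatic_lexProd_diam_three {α β : Type*} [Fintype α] [Fintype β]
    (G : SimpleGraph α) (H : SimpleGraph β)
    (hG : G.Connected) (hd : G.diam = 3) (hH : H ≠ ⊥) :
    (((G.lexProd H).packingChromatic : ℤ)) =
      (Fintype.card α * Fintype.card β : ℤ) - (G.indepNum' : ℤ) * (H.indepNum' : ℤ)
        - (G.packingNum 2 : ℤ) + 2 :=
  packingChromatic_lexProd_diam_three_general G H hd hH
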